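/- Uniqueness of the trend–noise decomposition of Scaling regime 2. Fix d ≥ 1 and β ∈ [0,1). Let Ā, Ā' : [0,1] → ℝ^{d×d} be continuous and W, W' : [0,1] → ℝ^{d×d} be continuous with W_0 = W'_0 = 0. Suppose that for every L ∈ ℕ and every 0 ≤ k < L, L^{-β} Ā_{k/L} + (W_{(k+1)/L} − W_{k/L}) = L^{-β} Ā'_{k/L} + (W'_{(k+1)/L} − W'_{k/L}). Then Ā = Ā' on [0,1] and W = W' on [0,1]. -/

import Mathlib

/-!
Write `V = W - W'` and `D = Ā - Ā'`. The hypothesis says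
`V((k+1)/L) - V(k/L) = -L^{-β} D(k/L)`, so the sum of `D` over any block of consecutive grid
points `j/L` telescopes to `L^β` times an increment of `V`, and is `O(L^β)` because `V` is
bounded. A block of about `ηL` grid points just right of `t` averages to within `ε` of `D t`,
while its sum is `O(L^β) = o(ηL)` as `β < 1`; hence `D = 0`. The telescoped sums then make `V`
vanish at every grid point `k/L`, and these are dense in `[0,1]`.
-/

open Filter Set Topology

lemma norm_le_norm_sum_div_card_add {ι E : Type*} [SeminormedAddCommGroup E] [NormedSpace ℝ E]
    {s : Finset ι} (hs : s.Nonempty) {f : ι → E} {c : E} {ε : ℝ}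
    (h : ∀ i ∈ s, ‖f i - c‖ ≤ ε) : ‖c‖ ≤ ‖∑ i ∈ s, f i‖ / s.card + ε := by
  have hcard : (0 : ℝ) < s.card := by exact_mod_cast hs.card_pos
  have key : s.card * ‖c‖ ≤ ‖∑ i ∈ s, f i‖ + s.card * ε :=
    calc s.card * ‖c‖ = ‖∑ i ∈ s, f i - ∑ i ∈ s, (f i - c)‖ := by
          rw [Finset.sum_sub_distrib, sub_sub_cancel, Finset.sum_const,
            ← Nat.cast_smul_eq_nsmul ℝ, norm_smul, Real.norm_natCast]
      _ ≤ ‖∑ i ∈ s, f i‖ + ∑ i ∈ s, ‖f i - c‖ :=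
          (norm_sub_le _ _).trans (by gcongr; exact norm_sum_le _ _)
      _ ≤ ‖∑ i ∈ s, f i‖ + s.card * ε := by
          gcongr
          simpa using Finset.sum_le_card_nsmul s _ ε h
  rw [div_add' _ _ _ hcard.ne', le_div_iff₀ hcard]
  linarith

lemma div_mem_Ico_of_mem_Ico_ceil {x y : ℝ} {L j : ℕ} (hL : 0 < L)
    (hj : j ∈ Finset.Ico ⌈x * L⌉₊ ⌈y * L⌉₊) : (j : ℝ) / L ∈ Ico x y := by
  have hL' : (0 : ℝ) < L := by exact_mod_cast hL
  rw [Finset.mem_Ico, Nat.ceil_le, Nat.lt_ceil] at hj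
  exact ⟨(le_div_iff₀ hL').2 hj.1, (div_lt_iff₀ hL').2 hj.2⟩

lemma sub_mul_sub_one_le_card_Ico_ceil {x : ℝ} (hx : 0 ≤ x) (y : ℝ) (L : ℕ) :
    (y - x) * L - 1 ≤ (Finset.Ico ⌈x * L⌉₊ ⌈y * L⌉₊).card := by
  have hx' := Nat.ceil_lt_add_one (mul_nonneg hx L.cast_nonneg)
  have hy := Nat.le_ceil (y * L)
  have hsub : (⌈y * L⌉₊ : ℝ) ≤ (⌈y * L⌉₊ - ⌈x * L⌉₊ : ℕ) + ⌈x * L⌉₊ := by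
    exact_mod_cast le_tsub_add
  rw [Nat.card_Ico]
  linarith

lemma tendsto_rpow_div_mul_sub_one_atTop {β η : ℝ} (hβ : β < 1) (hη : 0 < η) :
    Tendsto (fun x : ℝ => x ^ β / (η * x - 1)) atTop (𝓝 0) := by
  have hnum : Tendsto (fun x : ℝ => x ^ (-(1 - β))) atTop (𝓝 0) :=
    tendsto_rpow_neg_atTop (by linarith)
  have hden : Tendsto (fun x : ℝ => η - x⁻¹) atTop (𝓝 (η - 0)) :=
    tendsto_const_nhds.sub tendsto_inv_atTop_zero
  rw [sub_zero] at hden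
  have hlim := hnum.div hden hη.ne'
  rw [zero_div] at hlim
  refine hlim.congr' ?_
  filter_upwards [eventually_gt_atTop 0] with x hx
  simp only [Pi.div_apply, neg_sub, Real.rpow_sub_one hx.ne']
  field_simp

lemma Icc_subset_closure_of_forall_div_mem {s : Set ℝ}
    (hs : ∀ k L : ℕ, k ≤ L → (k : ℝ) / L ∈ s) :
    Icc (0 : ℝ) 1 ⊆ closure s := by
  intro t ht
  refine mem_closure_of_tendsto
    ((tendsto_nat_floor_mul_div_atTop ht.1).comp tendsto_natCast_atTop_atTop)
    (Eventually.of_forall fun L => hs _ _ (Nat.floor_le_of_le ?_))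
  exact mul_le_of_le_one_left L.cast_nonneg ht.2

lemma sub_eq_inv_smul_sub_of_smul_add_eq {E : Type*} [AddCommGroup E] [Module ℝ E] {c : ℝ}
    (hc : c ≠ 0) {a a' u u' : E} (h : c • a + u = c • a' + u') :
    a - a' = c⁻¹ • (u' - u) := by
  rw [eq_inv_smul_iff₀ hc, smul_sub, sub_eq_sub_iff_add_eq_add, h, add_comm]

lemma eq_zero_of_norm_sum_Ico_div_le {E : Type*} [NormedAddCommGroup E] [NormedSpace ℝ E]
    {D : ℝ → E} {t β C : ℝ} (hβ : β < 1) (ht : t ∈ Ico (0 : ℝ) 1)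
    (hD : ContinuousWithinAt D (Icc 0 1) t)
    (hsum : ∀ L a b : ℕ, a ≤ b → b ≤ L →
      ‖∑ j ∈ Finset.Ico a b, D (j / L)‖ ≤ C * (L : ℝ) ^ β) :
    D t = 0 := by
  have hC : 0 ≤ C := by simpa using (norm_nonneg _).trans (hsum 1 0 0 le_rfl zero_le_one)
  refine norm_le_zero_iff.mp (le_of_forall_pos_le_add fun ε hε => ?_)
  obtain ⟨δ, hδ, hδD⟩ := Metric.continuousWithinAt_iff.mp hD ε hε
  set η := min δ (1 - t)
  have hη : 0 < η := lt_min hδ (by linarith [ht.2])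
  have hηδ : η ≤ δ := min_le_left _ _
  have hη1 : η ≤ 1 - t := min_le_right _ _
  have hbound :
      ∀ᶠ L : ℕ in atTop, ‖D t‖ ≤ C * ((L : ℝ) ^ β / (η * L - 1)) + ε := by
    filter_upwards [eventually_gt_atTop ⌈η⁻¹⌉₊] with L hLη
    have hηL : 1 < η * L := by
      rw [← inv_mul_lt_iff₀ hη, mul_one]
      exact Nat.lt_of_ceil_lt hLη
    have hL : 0 < L := Nat.zero_lt_of_lt hLη
    set s := Finset.Ico ⌈t * L⌉₊ ⌈(t + η) * L⌉₊
    have hcard : η * L - 1 ≤ s.card := by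
      have := sub_mul_sub_one_le_card_Ico_ceil ht.1 (t + η) L
      rwa [add_sub_cancel_left] at this
    have hs : s.Nonempty :=
      Finset.card_pos.mp (by exact_mod_cast (by linarith : (0 : ℝ) < s.card))
    have hnear : ∀ j ∈ s, ‖D (j / L) - D t‖ ≤ ε := by
      intro j hj
      have hjt := div_mem_Ico_of_mem_Ico_ceil hL hj
      rw [← dist_eq_norm]
      refine (hδD ⟨ht.1.trans hjt.1, by linarith [hjt.2]⟩ ?_).le
      rw [Real.dist_eq, abs_of_nonneg (by linarith [hjt.1])]
      linarith [hjt.2]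
    have hb : ⌈(t + η) * L⌉₊ ≤ L :=
      Nat.ceil_le.mpr (mul_le_of_le_one_left L.cast_nonneg (by linarith))
    calc ‖D t‖ ≤ ‖∑ j ∈ s, D (j / L)‖ / s.card + ε :=
          norm_le_norm_sum_div_card_add hs hnear
      _ ≤ C * (L : ℝ) ^ β / (η * L - 1) + ε := by
          gcongr
          exact hsum L _ _ (Nat.ceil_mono (by gcongr; linarith)) hb
      _ = C * ((L : ℝ) ^ β / (η * L - 1)) + ε := by rw [mul_div_assoc]
  have hlim := ((tendsto_rpow_div_mul_sub_one_atTop hβ hη).comp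
    tendsto_natCast_atTop_atTop).const_mul C |>.add_const ε
  rw [mul_zero, zero_add] at hlim
  simpa using ge_of_tendsto hlim hbound

lemma natCast_div_mem_Icc {k L : ℕ} (hk : k ≤ L) : (k : ℝ) / L ∈ Icc (0 : ℝ) 1 :=
  ⟨by positivity, div_le_one_of_le₀ (by exact_mod_cast hk) L.cast_nonneg⟩

lemma sum_Ico_sub_eq_rpow_smul_sub {E : Type*} [AddCommGroup E] [Module ℝ E] {β : ℝ}
    {A A' W W' : ℝ → E}
    (h : ∀ L : ℕ, ∀ k < L,
      (L : ℝ) ^ (-β) • A (k / L) + (W ((k + 1) / L) - W (k / L)) =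
      (L : ℝ) ^ (-β) • A' (k / L) + (W' ((k + 1) / L) - W' (k / L)))
    {L a b : ℕ} (hab : a ≤ b) (hbL : b ≤ L) :
    ∑ j ∈ Finset.Ico a b, (A - A') (j / L) =
      (L : ℝ) ^ β • ((W - W') (a / L) - (W - W') (b / L)) := by
  have hstep : ∀ k ∈ Finset.Ico a b,
      (A - A') (k / L) = (L : ℝ) ^ β • ((W - W') (k / L) - (W - W') ((k + 1 : ℕ) / L)) := by
    intro k hk
    have hk : k < L := (Finset.mem_Ico.mp hk).2.trans_le hbL
    have hL : (0 : ℝ) < L := by exact_mod_cast k.zero_le.trans_lt hk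
    rw [Pi.sub_apply, sub_eq_inv_smul_sub_of_smul_add_eq (Real.rpow_pos_of_pos hL _).ne' (h L k hk),
      Real.rpow_neg hL.le, inv_inv, Nat.cast_succ, Pi.sub_apply, Pi.sub_apply]
    congr 1
    abel
  rw [Finset.sum_congr rfl hstep, ← Finset.smul_sum, ← neg_sub ((W - W') (b / L)),
    ← Finset.sum_Ico_sub (fun k : ℕ => (W - W') (k / L)) hab, ← Finset.sum_neg_distrib]
  simp_rw [neg_sub]

lemma apply_natCast_div_eq_of_eqOn {E : Type*} [AddCommGroup E] [Module ℝ E] {β : ℝ}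
    {A A' W W' : ℝ → E}
    (h : ∀ L : ℕ, ∀ k < L,
      (L : ℝ) ^ (-β) • A (k / L) + (W ((k + 1) / L) - W (k / L)) =
      (L : ℝ) ^ (-β) • A' (k / L) + (W' ((k + 1) / L) - W' (k / L)))
    (hA : EqOn A A' (Icc 0 1)) (hW : W 0 = W' 0) {k L : ℕ} (hk : k ≤ L) :
    W (k / L) = W' (k / L) := by
  rcases Nat.eq_zero_or_pos k with rfl | hk0
  · simpa using hW
  have hL : (0 : ℝ) < L := by exact_mod_cast hk0.trans_le hk
  have htel := sum_Ico_sub_eq_rpow_smul_sub h k.zero_le hk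
  rw [Finset.sum_eq_zero fun j hj => by
    rw [Pi.sub_apply, sub_eq_zero]
    exact hA (natCast_div_mem_Icc ((Finset.mem_Ico.mp hj).2.le.trans hk))] at htel
  simpa [hW, (Real.rpow_pos_of_pos hL β).ne', sub_eq_zero, eq_comm] using htel

theorem trend_noise_decomposition_unique_general
    (d : ℕ) (β : ℝ) (hβ1 : β < 1)
    (Abar Abar' W W' : ℝ → EuclideanSpace ℝ (Fin d × Fin d))
    (hAc : ContinuousOn Abar (Icc (0:ℝ) 1))
    (hAc' : ContinuousOn Abar' (Icc (0:ℝ) 1))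
    (hWc : ContinuousOn W (Icc (0:ℝ) 1))
    (hWc' : ContinuousOn W' (Icc (0:ℝ) 1))
    (hW0 : W 0 = 0) (hW0' : W' 0 = 0)
    (hdecomp : ∀ L : ℕ, ∀ k < L,
      ((L:ℝ) ^ (-β)) • Abar ((k:ℝ)/(L:ℝ)) + (W (((k:ℝ)+1)/(L:ℝ)) - W ((k:ℝ)/(L:ℝ))) =
      ((L:ℝ) ^ (-β)) • Abar' ((k:ℝ)/(L:ℝ)) + (W' (((k:ℝ)+1)/(L:ℝ)) - W' ((k:ℝ)/(L:ℝ)))) :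
    (∀ t ∈ Icc (0:ℝ) 1, Abar t = Abar' t) ∧ (∀ t ∈ Icc (0:ℝ) 1, W t = W' t) := by
  obtain ⟨C, hC⟩ := isCompact_Icc.exists_bound_of_continuousOn (hWc.sub hWc')
  have hsum : ∀ L a b : ℕ, a ≤ b → b ≤ L →
      ‖∑ j ∈ Finset.Ico a b, (Abar - Abar') (j / L)‖ ≤ 2 * C * (L : ℝ) ^ β := by
    intro L a b hab hbL
    rw [sum_Ico_sub_eq_rpow_smul_sub hdecomp hab hbL, norm_smul,
      Real.norm_of_nonneg (by positivity), mul_comm, two_mul]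
    gcongr
    exact (norm_sub_le _ _).trans (add_le_add (hC _ (natCast_div_mem_Icc (hab.trans hbL)))
      (hC _ (natCast_div_mem_Icc hbL)))
  have hA : EqOn Abar Abar' (Icc 0 1) :=
    EqOn.of_subset_closure (fun t ht => sub_eq_zero.mp <| eq_zero_of_norm_sum_Ico_div_le hβ1 ht
      ((hAc.sub hAc') t (Ico_subset_Icc_self ht)) hsum) hAc hAc' Ico_subset_Icc_self
      (closure_Ico zero_ne_one).ge
  refine ⟨hA, EqOn.of_subset_closure (fun x hx => hx.2) hWc hWc' (sep_subset _ _)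
    (Icc_subset_closure_of_forall_div_mem fun k L hk => ⟨natCast_div_mem_Icc hk, ?_⟩)⟩
  exact apply_natCast_div_eq_of_eqOn hdecomp hA (hW0.trans hW0'.symm) hk

/-- **Uniqueness of the trend–noise decomposition of Scaling regime 2.**
Fix `β ∈ [0,1)`. If `Ā, Ā'` are continuous on `[0,1]`, `W, W'` are continuous on `[0,1]` with
`W_0 = W'_0 = 0`, and for every `L ∈ ℕ` and `0 ≤ k < L`,
`L^{-β} Ā_{k/L} + (W_{(k+1)/L} − W_{k/L}) = L^{-β} Ā'_{k/L} + (W'_{(k+1)/L} − W'_{k/L})`,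
then `Ā = Ā'` on `[0,1]` and `W = W'` on `[0,1]`. -/
theorem trend_noise_decomposition_unique
    (d : ℕ) (hd : 1 ≤ d) (β : ℝ) (hβ0 : 0 ≤ β) (hβ1 : β < 1)
    (Abar Abar' W W' : ℝ → EuclideanSpace ℝ (Fin d × Fin d))
    (hAc : ContinuousOn Abar (Icc (0:ℝ) 1))
    (hAc' : ContinuousOn Abar' (Icc (0:ℝ) 1))
    (hWc : ContinuousOn W (Icc (0:ℝ) 1))
    (hWc' : ContinuousOn W' (Icc (0:ℝ) 1))
    (hW0 : W 0 = 0) (hW0' : W' 0 = 0)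
    (hdecomp : ∀ L : ℕ, ∀ k < L,
      ((L:ℝ) ^ (-β)) • Abar ((k:ℝ)/(L:ℝ)) + (W (((k:ℝ)+1)/(L:ℝ)) - W ((k:ℝ)/(L:ℝ))) =
      ((L:ℝ) ^ (-β)) • Abar' ((k:ℝ)/(L:ℝ)) + (W' (((k:ℝ)+1)/(L:ℝ)) - W' ((k:ℝ)/(L:ℝ)))) :
    (∀ t ∈ Icc (0:ℝ) 1, Abar t = Abar' t) ∧ (∀ t ∈ Icc (0:ℝ) 1, W t = W' t) :=
  trend_noise_decomposition_unique_general d β hβ1 Abar Abar' W W' hAc hAc' hWc hWc' hW0 hW0'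
    hdecomp
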